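/- arXiv:2407.11247 — 2 statements merged into one kernel-verified Lean document; each statement's English description precedes it below -/
import Mathlib

section
/- Let s, σ, η ∈ ℝ with 2η = −s·cos(σ + 2η). Set u = cos σ·k − sin σ·j (= e^{σi}k), h₀ = cos σ·j + sin σ·k (= e^{σi}j), h = exp(η·u) * h₀ * exp(−η·u), a = i, f = i, q = exp(s·h), p = exp(s·h) * exp((−2η)·u) * exp(−s·h), and b = exp(s·h) * exp((−σ)·u) * i * exp(−s·h). Then: (1) im(f*a⁻¹*h) = h, so q = exp(s·im(f*a⁻¹*h)); (2) p = exp(s·im(b*h)); (3) re(p * q * star(h) * a) = 0; (4) re(p * q * star(h) * a * star(h)) = 0; (5) re(b * star(h)) = −sin(σ + 2η). (Lemma 7.3 of the paper, earring case: the given circle of quaternion tuples satisfies the perturbation conditions and the earring equations G = (0,0); it parameterizes K_s, the preimage of the bottom edge of the pillowcase in N_s.) -/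
/-!
Rotating `(i, j, k)` about the `i`-axis by `σ` gives the frame `(i, h₀, u)`: unit imaginary
quaternions that pairwise anticommute, with `i h₀ = u`. Since `w e^{tv} = e^{-tv} w` whenever `v`
and `w` anticommute, `h = e^{2ηu} h₀`; it is again a unit imaginary quaternion anticommuting with
`u`, and `i h = e^{-2ηu} u`, `h i = -e^{2ηu} u`. Conjugation by `E = e^{sh}` fixes `h`, so
`b h = E (e^{-(σ+2η)u} u) E⁻¹ = sin(σ+2η) + cos(σ+2η) E u E⁻¹`. By the equation defining `η`,
`s im(b h) = E (-2ηu) E⁻¹`, whose exponential is `p`; and `p q h̄ a = E u`. The remaining real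
parts vanish because a product of two anticommuting imaginary quaternions has real part zero.
-/

open Quaternion

/-- The imaginary unit `i` of the quaternions. -/
noncomputable def qi : ℍ[ℝ] := ⟨0, 1, 0, 0⟩
/-- The imaginary unit `j` of the quaternions. -/
noncomputable def qj : ℍ[ℝ] := ⟨0, 0, 1, 0⟩
/-- The imaginary unit `k` of the quaternions. -/
noncomputable def qk : ℍ[ℝ] := ⟨0, 0, 0, 1⟩

open NormedSpace

namespace NormedSpace

section RealBanachAlgebra

variable {𝔸 : Type*} [NormedRing 𝔸] [NormedAlgebra ℝ 𝔸] [CompleteSpace 𝔸]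

lemma exp_smul_mul_exp_smul (v : 𝔸) (s t : ℝ) : exp (s • v) * exp (t • v) = exp ((s + t) • v) :=
  -- the general theory of `exp` is stated for normed `ℚ`-algebras
  let +nondep : NormedAlgebra ℚ 𝔸 := .restrictScalars ℚ ℝ 𝔸
  by rw [add_smul, exp_add_of_commute ((Commute.refl v).smul_left s |>.smul_right t)]

lemma exp_neg_smul_mul_exp_smul (v : 𝔸) (t : ℝ) : exp ((-t) • v) * exp (t • v) = 1 := by
  rw [exp_smul_mul_exp_smul, neg_add_cancel, zero_smul, exp_zero]

lemma mul_exp_smul_of_anticommute {v w : 𝔸} (hvw : v * w = -(w * v)) (t : ℝ) :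
    w * exp (t • v) = exp ((-t) • v) * w :=
  let +nondep : NormedAlgebra ℚ 𝔸 := .restrictScalars ℚ ℝ 𝔸
  SemiconjBy.exp_right (show w * (t • v) = ((-t) • v) * w by
    rw [mul_smul_comm, smul_mul_assoc, hvw, neg_smul, smul_neg, neg_neg])

lemma exp_smul_mul_mul_exp_neg_smul_of_anticommute {v w : 𝔸} (hvw : v * w = -(w * v))
    (t : ℝ) : exp (t • v) * w * exp ((-t) • v) = exp ((2 * t) • v) * w := by
  rw [mul_assoc, mul_exp_smul_of_anticommute hvw, neg_neg, ← mul_assoc, exp_smul_mul_exp_smul,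
    two_mul]

end RealBanachAlgebra

section RealBanachDivisionAlgebra

variable {𝔸 : Type*} [NormedDivisionRing 𝔸] [NormedAlgebra ℝ 𝔸]

lemma exp_smul_conj_mul_self (v x : 𝔸) (t : ℝ) :
    exp (t • v) * x * (exp (t • v))⁻¹ * v = exp (t • v) * (x * v) * (exp (t • v))⁻¹ := by
  have hc : Commute v (exp (t • v))⁻¹ := ((Commute.refl v).smul_right t).exp_right.inv_right₀
  rw [mul_assoc _ _ v, ← hc.eq, ← mul_assoc, mul_assoc _ x]

variable [CompleteSpace 𝔸]

lemma exp_neg_smul_eq_inv (v : 𝔸) (t : ℝ) : exp ((-t) • v) = (exp (t • v))⁻¹ :=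
  eq_inv_of_mul_eq_one_left (exp_neg_smul_mul_exp_smul v t)

lemma exp_smul_ne_zero (v : 𝔸) (t : ℝ) : exp (t • v) ≠ 0 :=
  right_ne_zero_of_mul_eq_one (exp_neg_smul_mul_exp_smul v t)

lemma exp_smul_conj {y : 𝔸} (hy : y ≠ 0) (t : ℝ) (x : 𝔸) :
    exp (t • (y * x * y⁻¹)) = y * exp (t • x) * y⁻¹ :=
  let +nondep : NormedAlgebra ℚ 𝔸 := .restrictScalars ℚ ℝ 𝔸
  by rw [← exp_conj _ _ hy, mul_smul_comm, smul_mul_assoc]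

end RealBanachDivisionAlgebra

end NormedSpace

namespace Quaternion

lemma re_mul_comm {R : Type*} [CommRing R] (a b : ℍ[R]) : (a * b).re = (b * a).re := by
  simp only [re_mul]
  ring

lemma im_eq_self_of_re_eq_zero {R : Type*} [CommRing R] {a : ℍ[R]} (ha : a.re = 0) :
    a.im = a := by
  ext <;> simp [ha]

lemma re_mul_eq_zero_of_anticommute {a b : ℍ[ℝ]} (hab : a * b = -(b * a)) : (a * b).re = 0 := by
  have h := re_mul_comm a b
  rw [hab, re_neg] at h ⊢
  linarith

lemma re_conj {E : ℍ[ℝ]} (hE : E ≠ 0) (x : ℍ[ℝ]) : (E * x * E⁻¹).re = x.re := by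
  rw [re_mul_comm, ← mul_assoc, inv_mul_cancel₀ hE, one_mul]

lemma im_conj {E : ℍ[ℝ]} (hE : E ≠ 0) (x : ℍ[ℝ]) : (E * x * E⁻¹).im = E * x.im * E⁻¹ := by
  have hsplit : E * x * E⁻¹ = ↑x.re + E * x.im * E⁻¹ := by
    conv_lhs => rw [← re_add_im x]
    rw [mul_add, add_mul, ← coe_commutes, mul_assoc, mul_inv_cancel₀ hE, mul_one]
  rw [hsplit, im_add, im_coe, zero_add, im_eq_self_of_re_eq_zero (by rw [re_conj hE, re_im])]

lemma norm_eq_one_iff_normSq_eq_one {a : ℍ[ℝ]} : ‖a‖ = 1 ↔ normSq a = 1 := by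
  rw [← pow_eq_one_iff_of_nonneg (norm_nonneg a) two_ne_zero, sq, normSq_eq_norm_mul_self]

lemma norm_exp_of_re_eq_zero {v : ℍ[ℝ]} (hre : v.re = 0) : ‖exp v‖ = 1 := by
  rw [norm_exp, hre]
  simp

section PureUnit

variable {v : ℍ[ℝ]}

lemma exp_smul_of_re_eq_zero_of_norm_eq_one (hre : v.re = 0) (hn : ‖v‖ = 1) (t : ℝ) :
    exp (t • v) = ↑(Real.cos t) + Real.sin t • v := by
  have hsinc : Real.sin |t| / |t| * t = Real.sin t := by
    have hsin : Real.sin |t| / |t| = Real.sin t / t := by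
      rcases abs_choice t with h | h <;> rw [h]
      rw [Real.sin_neg, neg_div_neg_eq]
    rw [hsin]
    exact div_mul_cancel_of_imp fun ht => by rw [ht, Real.sin_zero]
  rw [exp_of_re_eq_zero _ (by rw [re_smul, hre, smul_zero]), norm_smul, hn, mul_one,
    Real.norm_eq_abs, Real.cos_abs, smul_smul, hsinc]

lemma mul_self_eq_neg_one_of_re_eq_zero_of_norm_eq_one (hre : v.re = 0) (hn : ‖v‖ = 1) :
    v * v = -1 := by
  rw [← sq, sq_eq_neg_normSq.mpr hre, normSq_eq_norm_mul_self, hn, mul_one, coe_one]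

lemma exp_neg_smul_mul_self (hre : v.re = 0) (hn : ‖v‖ = 1) (t : ℝ) :
    exp ((-t) • v) * v = ↑(Real.sin t) + Real.cos t • v := by
  rw [exp_smul_of_re_eq_zero_of_norm_eq_one hre hn, add_mul, smul_mul_assoc,
    mul_self_eq_neg_one_of_re_eq_zero_of_norm_eq_one hre hn, Real.cos_neg, Real.sin_neg,
    coe_mul_eq_smul, add_comm]
  ext <;> simp

lemma re_exp_smul_mul_of_anticommute (hre : v.re = 0) (hn : ‖v‖ = 1) {w : ℍ[ℝ]}
    (hvw : v * w = -(w * v)) (hw : w.re = 0) (t : ℝ) : (exp (t • v) * w).re = 0 := by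
  rw [exp_smul_of_re_eq_zero_of_norm_eq_one hre hn, add_mul, smul_mul_assoc, coe_mul_eq_smul,
    re_add, re_smul, re_smul, hw, re_mul_eq_zero_of_anticommute hvw, smul_zero, smul_zero,
    add_zero]

end PureUnit

end Quaternion

/-- `rotJ σ = e^{σi} j` and `rotK σ = e^{σi} k` are the paper's `h₀` and `u`. -/
noncomputable def rotJ (σ : ℝ) : ℍ[ℝ] := Real.cos σ • qj + Real.sin σ • qk

noncomputable def rotK (σ : ℝ) : ℍ[ℝ] := Real.cos σ • qk - Real.sin σ • qj

section Frame

variable (σ : ℝ)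

lemma re_rotJ : (rotJ σ).re = 0 := by simp [rotJ]; simp [qj, qk]

lemma re_rotK : (rotK σ).re = 0 := by simp [rotK]; simp [qj, qk]

lemma norm_rotJ : ‖rotJ σ‖ = 1 := by
  rw [norm_eq_one_iff_normSq_eq_one]
  simp [rotJ, normSq_def']; simp [qj, qk]

lemma norm_rotK : ‖rotK σ‖ = 1 := by
  rw [norm_eq_one_iff_normSq_eq_one]
  simp [rotK, normSq_def']; simp [qj, qk]

lemma rotK_mul_rotJ : rotK σ * rotJ σ = -(rotJ σ * rotK σ) := by
  ext <;> simp [rotJ, rotK, re_mul, imI_mul, imJ_mul, imK_mul] <;> simp [qj, qk]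

lemma rotK_mul_qi : rotK σ * qi = -(qi * rotK σ) := by
  ext <;> simp [rotK, re_mul, imI_mul, imJ_mul, imK_mul] <;> simp [qi, qj, qk]

lemma qi_mul_rotJ : qi * rotJ σ = rotK σ := by
  ext <;> simp [rotJ, rotK, re_mul, imI_mul, imJ_mul, imK_mul] <;> simp [qi, qj, qk]

lemma rotJ_mul_qi : rotJ σ * qi = -rotK σ := by
  ext <;> simp [rotJ, rotK, re_mul, imI_mul, imJ_mul, imK_mul] <;> simp [qi, qj, qk]

end Frame

lemma qi_ne_zero : qi ≠ 0 := fun h => by simpa [qi] using congrArg QuaternionAlgebra.imI h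

/-- The paper's `h = e^{ηu} h₀ e^{-ηu}`, in the form `e^{2ηu} h₀` it takes because `u` and `h₀`
anticommute. -/
noncomputable def earringH (σ η : ℝ) : ℍ[ℝ] := exp ((2 * η) • rotK σ) * rotJ σ

section EarringH

variable (σ η : ℝ)

lemma exp_smul_rotK_mul_rotJ_mul_exp_neg_smul_rotK :
    exp (η • rotK σ) * rotJ σ * exp ((-η) • rotK σ) = earringH σ η :=
  exp_smul_mul_mul_exp_neg_smul_of_anticommute (rotK_mul_rotJ σ) η

lemma re_earringH : (earringH σ η).re = 0 :=
  re_exp_smul_mul_of_anticommute (re_rotK σ) (norm_rotK σ) (rotK_mul_rotJ σ) (re_rotJ σ) _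

lemma norm_earringH : ‖earringH σ η‖ = 1 := by
  rw [earringH, norm_mul, norm_exp_of_re_eq_zero (by rw [re_smul, re_rotK, smul_zero]),
    norm_rotJ, one_mul]

lemma earringH_mul_rotK : earringH σ η * rotK σ = -(rotK σ * earringH σ η) := by
  have hc : Commute (exp ((2 * η) • rotK σ)) (rotK σ) :=
    ((Commute.refl _).smul_left _).exp_left
  rw [earringH, mul_assoc, ← neg_neg (rotJ σ * rotK σ), ← rotK_mul_rotJ, mul_neg, ← mul_assoc,
    hc.eq, mul_assoc]

lemma star_earringH : star (earringH σ η) = -earringH σ η :=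
  star_eq_neg.mpr (re_earringH σ η)

lemma re_rotK_mul_earringH : (rotK σ * earringH σ η).re = 0 :=
  re_mul_eq_zero_of_anticommute (by rw [earringH_mul_rotK, neg_neg])

lemma earringH_mul_rotK_mul_earringH :
    earringH σ η * (rotK σ * earringH σ η) = -(rotK σ * earringH σ η * earringH σ η) := by
  rw [← mul_assoc, earringH_mul_rotK, neg_mul]

lemma qi_mul_earringH : qi * earringH σ η = exp ((-(2 * η)) • rotK σ) * rotK σ := by
  rw [earringH, ← mul_assoc, mul_exp_smul_of_anticommute (rotK_mul_qi σ), mul_assoc, qi_mul_rotJ]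

lemma exp_neg_smul_rotK_mul_earringH_mul_qi :
    exp ((-(2 * η)) • rotK σ) * (earringH σ η * qi) = -rotK σ := by
  rw [earringH, mul_assoc, rotJ_mul_qi, mul_neg, mul_neg, ← mul_assoc, exp_neg_smul_mul_exp_smul,
    one_mul]

lemma exp_neg_smul_rotK_mul_qi_mul_earringH :
    exp ((-σ) • rotK σ) * qi * earringH σ η =
      ↑(Real.sin (σ + 2 * η)) + Real.cos (σ + 2 * η) • rotK σ := by
  rw [mul_assoc, qi_mul_earringH, ← mul_assoc, exp_smul_mul_exp_smul, ← neg_add,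
    exp_neg_smul_mul_self (re_rotK σ) (norm_rotK σ)]

end EarringH

/-- Lemma 7.3 of the paper, earring case: with `η` the solution of `2η = −s·cos(σ + 2η)`,
the given circle of quaternion tuples satisfies the perturbation conditions and the earring
equations `G = (0,0)`; it parameterizes `K_s`, the preimage of the bottom edge of the
pillowcase in `N_s`. -/
theorem earring_bottom_edge_parameterization (s σ η : ℝ)
    (hη : 2 * η = -s * Real.cos (σ + 2 * η))
    (u h₀ h a f q p b : ℍ[ℝ])
    (hu : u = Real.cos σ • qk - Real.sin σ • qj)
    (hh₀ : h₀ = Real.cos σ • qj + Real.sin σ • qk)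
    (hh : h = NormedSpace.exp (η • u) * h₀ * NormedSpace.exp ((-η) • u))
    (ha : a = qi) (hf : f = qi)
    (hq : q = NormedSpace.exp (s • h))
    (hp : p = NormedSpace.exp (s • h) * NormedSpace.exp ((-(2 * η)) • u) *
      NormedSpace.exp ((-s) • h))
    (hb : b = NormedSpace.exp (s • h) * NormedSpace.exp ((-σ) • u) * qi *
      NormedSpace.exp ((-s) • h)) :
    Quaternion.im (f * a⁻¹ * h) = h ∧
    q = NormedSpace.exp (s • Quaternion.im (f * a⁻¹ * h)) ∧
    p = NormedSpace.exp (s • Quaternion.im (b * h)) ∧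
    (p * q * star h * a).re = 0 ∧
    (p * q * star h * a * star h).re = 0 ∧
    (b * star h).re = -Real.sin (σ + 2 * η) := by
  have hu' : u = rotK σ := hu
  have hh₀' : h₀ = rotJ σ := hh₀
  subst hu' hh₀' ha hf hq
  rw [exp_smul_rotK_mul_rotJ_mul_exp_neg_smul_rotK] at hh
  subst hh
  rw [exp_neg_smul_eq_inv (earringH σ η) s] at hp hb
  set E := exp (s • earringH σ η)
  have hE : E ≠ 0 := exp_smul_ne_zero _ s
  have him : (qi * qi⁻¹ * earringH σ η).im = earringH σ η := by
    rw [mul_inv_cancel₀ qi_ne_zero, one_mul, im_eq_self_of_re_eq_zero (re_earringH σ η)]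
  have hbh : b * earringH σ η =
      E * (↑(Real.sin (σ + 2 * η)) + Real.cos (σ + 2 * η) • rotK σ) * E⁻¹ := by
    rw [hb, mul_assoc E, exp_smul_conj_mul_self, exp_neg_smul_rotK_mul_qi_mul_earringH]
  have hpq : p * E * star (earringH σ η) * qi = E * rotK σ := by
    rw [hp, inv_mul_cancel_right₀ hE, star_earringH, mul_neg, neg_mul, mul_assoc, mul_assoc,
      exp_neg_smul_rotK_mul_earringH_mul_qi, mul_neg, neg_neg]
  refine ⟨him, by rw [him], ?_, ?_, ?_, ?_⟩
  · have hscos : s * Real.cos (σ + 2 * η) = -(2 * η) := by linarith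
    rw [hbh, im_conj hE, im_add, im_coe, zero_add, im_smul,
      im_eq_self_of_re_eq_zero (re_rotK σ), mul_smul_comm, smul_mul_assoc, smul_smul, hscos,
      exp_smul_conj hE, hp]
  · rw [hpq]
    exact re_exp_smul_mul_of_anticommute (re_earringH σ η) (norm_earringH σ η)
      (earringH_mul_rotK σ η) (re_rotK σ) s
  · rw [hpq, star_earringH, mul_neg, re_neg, mul_assoc, neg_eq_zero]
    exact re_exp_smul_mul_of_anticommute (re_earringH σ η) (norm_earringH σ η)
      (earringH_mul_rotK_mul_earringH σ η) (re_rotK_mul_earringH σ η) s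
  · rw [star_earringH, mul_neg, re_neg, hbh, re_conj hE]
    simp [re_rotK]
end

section
/- Let s ∈ ℝ and let b, h be unit quaternions with re(b) = 0 and re(h) = 0. Set a = i, f = i, p = exp(s·im(b*h)), q = exp(s·h), and define c = q⁻¹ * p⁻¹ * b * p * q and d = q⁻¹ * p⁻¹ * b⁻¹ * p * b * a * f⁻¹ * q * f. Then: (1) re(c⁻¹ * d) = re(b⁻¹ * q * i * q⁻¹); (2) re(f⁻¹ * d) = re(p⁻¹ * p⁻¹); (3) re(d⁻¹ * c⁻¹ * d * f) = re(b⁻¹ * p⁻¹ * p⁻¹ * q * i * q⁻¹). (Lemma 5.4 of the paper: for a representation with ρ(f) = ρ(a) = i, the coordinates of π₀ ∘ U_s are the characters (re(b̄ q i q̄), re(p̄²), re(b̄ p̄² q i q̄)).) -/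
/-!
A pure quaternion `b` anticommutes with the pure quaternion `im (b * h) = b × h`, so conjugation
by `b` inverts `p = exp (s • im (b * h))`. In any group in which `b` inverts `p`, the words
`c = q⁻¹ p⁻¹ b p q` and `d = q⁻¹ p⁻¹ b⁻¹ p b f f⁻¹ q f` reduce to `q⁻¹ p⁻² b q` and `q⁻¹ p⁻² q f`,
which makes each of `c⁻¹ d`, `f⁻¹ d`, `d⁻¹ c⁻¹ d f` conjugate to the corresponding element on the
right-hand side. The real part is a class function on `ℍ`, since `re (x * y) = re (y * x)`.
-/

open Quaternion

theorem SemiconjBy.isConj_peripheral_words {G : Type*} [Group G] {b p c d : G}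
    (hbp : SemiconjBy b p p⁻¹) (q f : G)
    (hc : c = q⁻¹ * p⁻¹ * b * p * q) (hd : d = q⁻¹ * p⁻¹ * b⁻¹ * p * b * f * f⁻¹ * q * f) :
    IsConj (c⁻¹ * d) (b⁻¹ * q * f * q⁻¹) ∧ IsConj (f⁻¹ * d) (p⁻¹ * p⁻¹) ∧
      IsConj (d⁻¹ * c⁻¹ * d * f) (b⁻¹ * p⁻¹ * p⁻¹ * q * f * q⁻¹) := by
  have hb'p : SemiconjBy b⁻¹ p p⁻¹ := by simpa using hbp.inv_symm_left.inv_right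
  have hc' : c = q⁻¹ * p⁻¹ * p⁻¹ * b * q := by
    rw [hc, mul_assoc _ b p, hbp.eq]; group
  have hd' : d = q⁻¹ * p⁻¹ * p⁻¹ * q * f := by
    rw [hd, mul_assoc _ b⁻¹ p, hb'p.eq]; group
  have hpb : p * p * b⁻¹ = b⁻¹ * p⁻¹ * p⁻¹ := by
    simpa [mul_assoc] using (hb'p.inv_right.mul_right hb'p.inv_right).eq.symm
  subst hc' hd'
  refine ⟨isConj_iff.2 ⟨q, by group⟩, isConj_iff.2 ⟨q * f, by group⟩, isConj_iff.2 ⟨q * f, ?_⟩⟩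
  rw [← hpb, ← sq]
  group

namespace Quaternion

section CommRing

variable {R : Type*} [CommRing R]

theorem re_mul_comm_s16 (x y : ℍ[R]) : (x * y).re = (y * x).re := by
  simp only [re_mul]; ring

theorem re_eq_of_isConj {x y : ℍ[R]} (h : IsConj x y) : x.re = y.re := by
  obtain ⟨u, hu⟩ := h
  calc x.re = (↑u⁻¹ * (u * x)).re := by simp
    _ = (y * u * ↑u⁻¹).re := by rw [hu.eq, re_mul_comm_s16]
    _ = y.re := by simp [mul_assoc]

theorem semiconjBy_im_mul {b h : ℍ[R]} (hb : b.re = 0) (hh : h.re = 0) :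
    SemiconjBy b (b * h).im (-(b * h).im) := by
  ext <;> simp [re_mul, imI_mul, imJ_mul, imK_mul, hb, hh] <;> ring

end CommRing

theorem exp_ne_zero (x : ℍ[ℝ]) : NormedSpace.exp x ≠ 0 := by
  rw [← norm_ne_zero_iff, norm_exp, ← Real.exp_eq_exp_ℝ, Real.norm_eq_abs]
  positivity

theorem semiconjBy_exp_smul_im_mul {b h : ℍ[ℝ]} (hb : b.re = 0) (hh : h.re = 0) (s : ℝ) :
    SemiconjBy b (NormedSpace.exp (s • (b * h).im)) (NormedSpace.exp (s • (b * h).im))⁻¹ := by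
  let _ : NormedAlgebra ℚ ℍ[ℝ] := .restrictScalars ℚ ℝ ℍ[ℝ]
  rw [← NormedSpace.exp_neg, ← smul_neg]
  exact ((semiconjBy_im_mul hb hh).smul_right s).exp_right

end Quaternion

theorem characters_after_involution_general (s : ℝ) (b h : ℍ[ℝ])
    (hb : ‖b‖ = 1) (hbre : b.re = 0) (hhre : h.re = 0)
    (a f p q c d : ℍ[ℝ])
    (ha : a = qi) (hf : f = qi)
    (hp : p = NormedSpace.exp (s • Quaternion.im (b * h)))
    (hq : q = NormedSpace.exp (s • h))
    (hc : c = q⁻¹ * p⁻¹ * b * p * q)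
    (hd : d = q⁻¹ * p⁻¹ * b⁻¹ * p * b * a * f⁻¹ * q * f) :
    (c⁻¹ * d).re = (b⁻¹ * q * qi * q⁻¹).re ∧
    (f⁻¹ * d).re = (p⁻¹ * p⁻¹).re ∧
    (d⁻¹ * c⁻¹ * d * f).re = (b⁻¹ * p⁻¹ * p⁻¹ * q * qi * q⁻¹).re := by
  have hbp : SemiconjBy b p p⁻¹ := hp ▸ semiconjBy_exp_smul_im_mul hbre hhre s
  have hf0 : f ≠ 0 := by rintro rfl; simpa [qi] using congrArg QuaternionAlgebra.imI hf
  lift b to ℍ[ℝ]ˣ using (norm_ne_zero_iff.mp (hb ▸ one_ne_zero)).isUnit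
  lift p to ℍ[ℝ]ˣ using (hp ▸ exp_ne_zero _).isUnit
  lift q to ℍ[ℝ]ˣ using (hq ▸ exp_ne_zero _).isUnit
  lift f to ℍ[ℝ]ˣ using hf0.isUnit
  obtain rfl : a = f := ha.trans hf.symm
  have hbp' : SemiconjBy b p p⁻¹ := Units.ext (by simpa using hbp.eq)
  obtain ⟨h₁, h₂, h₃⟩ := hbp'.isConj_peripheral_words q f rfl rfl
  subst hc hd
  rw [← hf]
  simp only [← Units.val_inv_eq_inv_val, ← Units.val_mul]
  exact ⟨re_eq_of_isConj ((Units.coeHom _).map_isConj h₁),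
    re_eq_of_isConj ((Units.coeHom _).map_isConj h₂), re_eq_of_isConj ((Units.coeHom _).map_isConj h₃)⟩

/-- Lemma 5.4 of the paper: for a representation with `ρ(f) = ρ(a) = i`, the coordinates of
`π₀ ∘ U_s` are given by the characters `(re(b̄ q i q̄), re(p̄²), re(b̄ p̄² q i q̄))`, where
`c = q̄ p̄ b p q` and `d = q̄ p̄ b̄ p b a f̄ q f`. -/
theorem characters_after_involution (s : ℝ) (b h : ℍ[ℝ])
    (hb : ‖b‖ = 1) (hh : ‖h‖ = 1) (hbre : b.re = 0) (hhre : h.re = 0)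
    (a f p q c d : ℍ[ℝ])
    (ha : a = qi) (hf : f = qi)
    (hp : p = NormedSpace.exp (s • Quaternion.im (b * h)))
    (hq : q = NormedSpace.exp (s • h))
    (hc : c = q⁻¹ * p⁻¹ * b * p * q)
    (hd : d = q⁻¹ * p⁻¹ * b⁻¹ * p * b * a * f⁻¹ * q * f) :
    (c⁻¹ * d).re = (b⁻¹ * q * qi * q⁻¹).re ∧
    (f⁻¹ * d).re = (p⁻¹ * p⁻¹).re ∧
    (d⁻¹ * c⁻¹ * d * f).re = (b⁻¹ * p⁻¹ * p⁻¹ * q * qi * q⁻¹).re :=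
  characters_after_involution_general s b h hb hbre hhre a f p q c d ha hf hp hq hc hd
end
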